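/- Assume f has an L_g-quadratic upper bound with L_g > 0, and let η̄ ∈ (0,1), β > 1, ε ∈ (0,1). Let x ∈ ℝⁿ and suppose there is an index i with |x_i| ≤ √ε and g^ε(x)_i ≠ 0 (equivalently, |(∇f(x))_i| > λ + ε^{3/4}). Then ‖G_t(x)‖² ≥ ε^{3/2} for every t > 0; moreover there exists a smallest nonnegative integer j* with φ(P_{β^{j*}}(x)) < φ(x) − (η̄/β^{j*})·‖G_{β^{j*}}(x)‖², and φ(x) − φ(P_{β^{j*}}(x)) ≥ (η̄ / max{βL_g/(2 − 2η̄), 1})·ε^{3/2}. -/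

import Mathlib

/-!
Soft-thresholding makes `G_t(x) - ∇f(x)` a subgradient of `λ‖·‖₁` at `P_t(x) = x - G_t(x)/t`.
Together with the quadratic upper bound this gives
`φ(P_t x) ≤ φ(x) - (1/t - L_g/(2t²)) ‖G_t(x)‖²`, so the Armijo test with parameter `η̄` succeeds
as soon as `t > L_g/(2 - 2η̄)`, and the first successful `t = β^j` is at most
`max {β L_g/(2 - 2η̄), 1}`. On a coordinate with `|x_i| ≤ √ε` and `g^ε(x)_i ≠ 0` we have
`|∇f(x)_i| > λ + ε^{3/4}`, while each branch of soft-thresholding gives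
`|G_t(x)_i| ≥ |∇f(x)_i| - λ`; hence `‖G_t(x)‖² > ε^{3/2}` for every `t > 0`.
-/

open scoped RealInnerProductSpace

noncomputable section

/-- `ℝⁿ` with the Euclidean norm. -/
abbrev E (n : ℕ) := EuclideanSpace ℝ (Fin n)

/-- The vector `g(x)` measuring first-order stationarity of `f + lam‖·‖₁`. -/
def gvec (n : ℕ) (f : E n → ℝ) (lam : ℝ) (x : E n) : E n := WithLp.toLp 2 fun i =>
  if 0 < x i then gradient f x i + lam
  else if x i < 0 then gradient f x i - lam
  else gradient f x i - min (max (-lam) (gradient f x i)) lam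

/-- The proximal-gradient residual `G_t(x) = t (x - prox_{(lam/t)‖·‖₁}(x - ∇f(x)/t))`. -/
def Gres (n : ℕ) (f : E n → ℝ) (lam t : ℝ) (x : E n) : E n := WithLp.toLp 2 fun i =>
  if (gradient f x i + lam) / t < x i then gradient f x i + lam
  else if x i < (gradient f x i - lam) / t then gradient f x i - lam
  else t * x i

/-- The proximal-gradient update `P_t(x) = prox_{(lam/t)‖·‖₁}(x - ∇f(x)/t)` (soft-thresholding). -/
def Pt (n : ℕ) (f : E n → ℝ) (lam t : ℝ) (x : E n) : E n := WithLp.toLp 2 fun i =>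
  if lam / t < x i - gradient f x i / t then x i - gradient f x i / t - lam / t
  else if x i - gradient f x i / t < -(lam / t) then x i - gradient f x i / t + lam / t
  else 0

/-- The objective `φ(x) = f(x) + lam ‖x‖₁`. -/
def phi (n : ℕ) (f : E n → ℝ) (lam : ℝ) (x : E n) : ℝ := f x + lam * ∑ i, |x i|

/-- The Hessian of `f` at `x`, as a continuous linear map. -/
def hess (n : ℕ) (f : E n → ℝ) (x : E n) : E n →L[ℝ] E n := fderiv ℝ (gradient f) x

/-- The scaling map `S_{x,ε}`: identity on coordinates with `|x_i| > √ε`, multiplication by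
`x_i` on the others. -/
def Smap (n : ℕ) (x : E n) (eps : ℝ) (u : E n) : E n := WithLp.toLp 2 fun i =>
  if Real.sqrt eps < |x i| then u i else x i * u i

/-- The relaxed first-order residual vector `g^ε(x)`. -/
def gveps (n : ℕ) (f : E n → ℝ) (lam eps : ℝ) (x : E n) : E n := WithLp.toLp 2 fun i =>
  if Real.sqrt eps < x i then gradient f x i + lam
  else if x i < -Real.sqrt eps then gradient f x i - lam
  else gradient f x i -
    min (max (-(lam + eps ^ ((3:ℝ)/4))) (gradient f x i)) (lam + eps ^ ((3:ℝ)/4))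

section ProximalGradient

variable {n : ℕ} (f : E n → ℝ) (lam : ℝ) {t : ℝ} (x : E n)

lemma Gres_apply (ht : 0 < t) (i : Fin n) :
    Gres n f lam t x i =
      if gradient f x i + lam < t * x i then gradient f x i + lam
      else if t * x i < gradient f x i - lam then gradient f x i - lam
      else t * x i := by
  simp only [Gres, PiLp.toLp_apply, div_lt_iff₀' ht, lt_div_iff₀' ht]

lemma Pt_apply (ht : 0 < t) (i : Fin n) :
    Pt n f lam t x i = x i - Gres n f lam t x i / t := by
  have h₁ : lam / t < x i - gradient f x i / t ↔ gradient f x i + lam < t * x i := by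
    rw [lt_sub_iff_add_lt, ← add_div, add_comm, div_lt_iff₀' ht]
  have h₂ : x i - gradient f x i / t < -(lam / t) ↔ t * x i < gradient f x i - lam := by
    rw [sub_lt_iff_lt_add, ← neg_div, ← add_div, neg_add_eq_sub, lt_div_iff₀' ht]
  simp only [Pt, PiLp.toLp_apply, h₁, h₂, Gres_apply f lam x ht]
  split_ifs <;> field_simp <;> ring

lemma Pt_eq (ht : 0 < t) : Pt n f lam t x = x - t⁻¹ • Gres n f lam t x := by
  ext i
  simp [Pt_apply f lam x ht, div_eq_inv_mul]

lemma lam_abs_Pt_sub_le (hlam : 0 ≤ lam) (ht : 0 < t) (i : Fin n) :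
    lam * |Pt n f lam t x i| - lam * |x i| ≤
      (gradient f x i * Gres n f lam t x i - Gres n f lam t x i ^ 2) / t := by
  have hP : |Pt n f lam t x i| = |t * x i - Gres n f lam t x i| / t := by
    rw [Pt_apply f lam x ht, ← abs_of_pos ht, ← abs_div, abs_of_pos ht]
    congr 1
    field_simp
  have hx : |x i| = |t * x i| / t := by
    rw [abs_mul, abs_of_pos ht]
    field_simp
  rw [hP, hx, mul_div_assoc', mul_div_assoc', ← sub_div]
  refine div_le_div_of_nonneg_right ?_ ht.le
  rw [Gres_apply f lam x ht]
  split_ifs with h₁ h₂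
  · rw [abs_of_pos (sub_pos.mpr h₁)]
    nlinarith [le_abs_self (t * x i)]
  · rw [abs_of_neg (sub_neg.mpr h₂)]
    nlinarith [neg_abs_le (t * x i)]
  · push Not at h₁ h₂
    rcases le_or_gt 0 (t * x i) with hy | hy
    · rw [sub_self, abs_zero, abs_of_nonneg hy]
      nlinarith
    · rw [sub_self, abs_zero, abs_of_neg hy]
      nlinarith

lemma abs_gradient_sub_le_abs_Gres (hlam : 0 ≤ lam) (ht : 0 < t) (i : Fin n) :
    |gradient f x i| - lam ≤ |Gres n f lam t x i| := by
  rw [Gres_apply f lam x ht]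
  split_ifs with h₁ h₂ <;>
  · rcases abs_cases (gradient f x i) with ⟨hg, -⟩ | ⟨hg, -⟩ <;> rw [hg] <;>
      linarith [le_abs_self (gradient f x i + lam), neg_abs_le (gradient f x i + lam),
        le_abs_self (gradient f x i - lam), neg_abs_le (gradient f x i - lam),
        le_abs_self (t * x i), neg_abs_le (t * x i)]

lemma lam_l1_Pt_sub_le (hlam : 0 ≤ lam) (ht : 0 < t) :
    lam * ∑ i, |Pt n f lam t x i| - lam * ∑ i, |x i| ≤
      (⟪gradient f x, Gres n f lam t x⟫ - ‖Gres n f lam t x‖ ^ 2) / t := by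
  rw [EuclideanSpace.real_norm_sq_eq, PiLp.inner_apply, Finset.mul_sum, Finset.mul_sum,
    ← Finset.sum_sub_distrib, ← Finset.sum_sub_distrib, Finset.sum_div]
  refine Finset.sum_le_sum fun i _ => ?_
  simpa [mul_comm] using lam_abs_Pt_sub_le f lam x hlam ht i

lemma lt_abs_gradient_of_gveps_ne_zero {ε : ℝ} {i : Fin n} (hxi : |x i| ≤ Real.sqrt ε)
    (hg : gveps n f lam ε x i ≠ 0) : lam + ε ^ ((3:ℝ)/4) < |gradient f x i| := by
  contrapose! hg
  rw [gveps, PiLp.toLp_apply, if_neg (abs_le.mp hxi).2.not_gt, if_neg (abs_le.mp hxi).1.not_gt,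
    max_eq_right (neg_le_of_abs_le hg), min_eq_left (le_of_abs_le hg), sub_self]

lemma rpow_three_halves_lt_norm_sq_Gres (hlam : 0 ≤ lam) {ε : ℝ} (hε : 0 ≤ ε) (ht : 0 < t)
    {i : Fin n} (hxi : |x i| ≤ Real.sqrt ε) (hg : gveps n f lam ε x i ≠ 0) :
    ε ^ ((3:ℝ)/2) < ‖Gres n f lam t x‖ ^ 2 := by
  have hG : ε ^ ((3:ℝ)/4) < |Gres n f lam t x i| := by
    linarith [lt_abs_gradient_of_gveps_ne_zero f lam x hxi hg,
      abs_gradient_sub_le_abs_Gres f lam x hlam ht i]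
  calc ε ^ ((3:ℝ)/2) = (ε ^ ((3:ℝ)/4)) ^ 2 := by
        rw [← Real.rpow_natCast, ← Real.rpow_mul hε]
        norm_num
    _ < |Gres n f lam t x i| ^ 2 := by gcongr
    _ ≤ ‖Gres n f lam t x‖ ^ 2 := by
        rw [← Real.norm_eq_abs]
        gcongr
        exact PiLp.norm_apply_le _ i

lemma phi_Pt_le {Lg : ℝ}
    (hquad : ∀ y, f y ≤ f x + ⟪gradient f x, y - x⟫ + Lg / 2 * ‖y - x‖ ^ 2)
    (hlam : 0 ≤ lam) (ht : 0 < t) :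
    phi n f lam (Pt n f lam t x) ≤
      phi n f lam x + (Lg / (2 * t ^ 2) - 1 / t) * ‖Gres n f lam t x‖ ^ 2 := by
  have hf := hquad (Pt n f lam t x)
  have hl1 := lam_l1_Pt_sub_le f lam x hlam ht
  rw [Pt_eq f lam x ht, sub_sub_cancel_left, inner_neg_right, real_inner_smul_right, norm_neg,
    norm_smul, mul_pow, Real.norm_eq_abs, abs_of_pos (inv_pos.mpr ht)] at hf
  have hcoeff : (Lg / (2 * t ^ 2) - 1 / t) * ‖Gres n f lam t x‖ ^ 2 =
      Lg / 2 * (t⁻¹ ^ 2 * ‖Gres n f lam t x‖ ^ 2) - t⁻¹ * ‖Gres n f lam t x‖ ^ 2 := by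
    field_simp
  rw [phi, phi, hcoeff, Pt_eq f lam x ht]
  rw [Pt_eq f lam x ht, div_eq_inv_mul, mul_sub] at hl1
  linarith

lemma phi_Pt_lt_of_lt {Lg η : ℝ}
    (hquad : ∀ y, f y ≤ f x + ⟪gradient f x, y - x⟫ + Lg / 2 * ‖y - x‖ ^ 2)
    (hlam : 0 ≤ lam) (ht : 0 < t) (hη : η < 1) (hLt : Lg / (2 - 2 * η) < t)
    (hG : Gres n f lam t x ≠ 0) :
    phi n f lam (Pt n f lam t x) < phi n f lam x - η / t * ‖Gres n f lam t x‖ ^ 2 := by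
  have hcoeff : Lg / (2 * t ^ 2) - 1 / t < -(η / t) := by
    have hL : Lg < t * (2 - 2 * η) := (div_lt_iff₀ (by linarith)).mp hLt
    have hsum : Lg / (2 * t ^ 2) - 1 / t + η / t = (Lg - t * (2 - 2 * η)) / (2 * t ^ 2) := by
      field_simp
      ring
    have hneg : (Lg - t * (2 - 2 * η)) / (2 * t ^ 2) < 0 :=
      div_neg_of_neg_of_pos (by linarith) (by positivity)
    linarith
  have hpos : 0 < ‖Gres n f lam t x‖ ^ 2 := pow_pos (norm_pos_iff.mpr hG) 2
  calc phi n f lam (Pt n f lam t x)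
      ≤ phi n f lam x + (Lg / (2 * t ^ 2) - 1 / t) * ‖Gres n f lam t x‖ ^ 2 :=
        phi_Pt_le f lam x hquad hlam ht
    _ < phi n f lam x - η / t * ‖Gres n f lam t x‖ ^ 2 := by
        linarith [mul_lt_mul_of_pos_right hcoeff hpos]

end ProximalGradient

lemma exists_minimal_of_forall_lt_pow {β c : ℝ} (hβ : 1 < β) {p : ℕ → Prop}
    (hp : ∀ j, c < β ^ j → p j) :
    ∃ j, p j ∧ (∀ j' < j, ¬ p j') ∧ β ^ j ≤ max (β * c) 1 := by
  classical
  have hex : ∃ j, p j :=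
    let ⟨j, hj⟩ := pow_unbounded_of_one_lt c hβ
    ⟨j, hp j hj⟩
  refine ⟨Nat.find hex, Nat.find_spec hex, fun j' => Nat.find_min hex, ?_⟩
  rcases h : Nat.find hex with _ | k
  · simp
  · have hk : β ^ k ≤ c :=
      not_lt.mp fun hck => Nat.find_min hex (h ▸ k.lt_succ_self) (hp k hck)
    calc β ^ (k + 1) = β * β ^ k := pow_succ' β k
      _ ≤ β * c := by gcongr
      _ ≤ max (β * c) 1 := le_max_left _ _

theorem stmt10_general {n : ℕ} (f : E n → ℝ) (lam : ℝ) (hlam : 0 < lam)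
    (Lg : ℝ)
    (hquad : ∀ x y : E n, ∀ L : ℝ, Lg ≤ L →
      f y ≤ f x + ⟪gradient f x, y - x⟫ + L / 2 * ‖y - x‖ ^ 2)
    (ηb β ε : ℝ) (hη : ηb ∈ Set.Ioo (0:ℝ) 1) (hβ : 1 < β) (hε : ε ∈ Set.Ioo (0:ℝ) 1)
    (x : E n) (hi : ∃ i, |x i| ≤ Real.sqrt ε ∧ gveps n f lam ε x i ≠ 0) :
    (∀ t : ℝ, 0 < t → ε ^ ((3:ℝ)/2) ≤ ‖Gres n f lam t x‖ ^ 2) ∧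
    ∃ j : ℕ,
      (phi n f lam (Pt n f lam (β ^ j) x) <
          phi n f lam x - ηb / β ^ j * ‖Gres n f lam (β ^ j) x‖ ^ 2) ∧
      (∀ j' < j, ¬(phi n f lam (Pt n f lam (β ^ j') x) <
          phi n f lam x - ηb / β ^ j' * ‖Gres n f lam (β ^ j') x‖ ^ 2)) ∧
      ηb / max (β * Lg / (2 - 2 * ηb)) 1 * ε ^ ((3:ℝ)/2) ≤
        phi n f lam x - phi n f lam (Pt n f lam (β ^ j) x) := by
  obtain ⟨i, hxi, hgi⟩ := hi
  have hG : ∀ t, 0 < t → ε ^ ((3:ℝ)/2) < ‖Gres n f lam t x‖ ^ 2 := fun t ht =>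
    rpow_three_halves_lt_norm_sq_Gres f lam x hlam.le hε.1.le ht hxi hgi
  have hGne : ∀ t, 0 < t → Gres n f lam t x ≠ 0 := fun t ht h => by
    simpa [h] using (Real.rpow_nonneg hε.1.le _).trans_lt (hG t ht)
  have hβj : ∀ j : ℕ, 0 < β ^ j := fun j => pow_pos (one_pos.trans hβ) j
  obtain ⟨j, hj, hmin, hβj_le⟩ := exists_minimal_of_forall_lt_pow hβ
    (p := fun j => phi n f lam (Pt n f lam (β ^ j) x) <
      phi n f lam x - ηb / β ^ j * ‖Gres n f lam (β ^ j) x‖ ^ 2)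
    fun j hj => phi_Pt_lt_of_lt f lam x (hquad x · Lg le_rfl) hlam.le (hβj j) hη.2 hj
      (hGne _ (hβj j))
  refine ⟨fun t ht => (hG t ht).le, j, hj, hmin, ?_⟩
  rw [mul_div_assoc]
  calc ηb / max (β * (Lg / (2 - 2 * ηb))) 1 * ε ^ ((3:ℝ)/2)
      ≤ ηb / β ^ j * ε ^ ((3:ℝ)/2) := 
        mul_le_mul_of_nonneg_right (div_le_div_of_nonneg_left hη.1.le (hβj j) hβj_le)
          (Real.rpow_nonneg hε.1.le _)
    _ ≤ ηb / β ^ j * ‖Gres n f lam (β ^ j) x‖ ^ 2 := 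
        mul_le_mul_of_nonneg_left (hG _ (hβj j)).le (div_nonneg hη.1.le (hβj j).le)
    _ ≤ phi n f lam x - phi n f lam (Pt n f lam (β ^ j) x) := by linarith

/-- If some nearly-zero coordinate has a nonzero relaxed residual
`g^ε(x)_i ≠ 0`, then `‖G_t(x)‖² ≥ ε^{3/2}` for all `t > 0`, the proximal-gradient line search
terminates at a smallest `j*`, and the resulting decrease is at least
`(η̄ / max{βL_g/(2-2η̄), 1}) ε^{3/2}`. -/
theorem stmt10 {n : ℕ} (f : E n → ℝ) (hf : Differentiable ℝ f) (lam : ℝ) (hlam : 0 < lam)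
    (Lg : ℝ) (hLg : 0 < Lg)
    (hquad : ∀ x y : E n, ∀ L : ℝ, Lg ≤ L →
      f y ≤ f x + ⟪gradient f x, y - x⟫ + L / 2 * ‖y - x‖ ^ 2)
    (ηb β ε : ℝ) (hη : ηb ∈ Set.Ioo (0:ℝ) 1) (hβ : 1 < β) (hε : ε ∈ Set.Ioo (0:ℝ) 1)
    (x : E n) (hi : ∃ i, |x i| ≤ Real.sqrt ε ∧ gveps n f lam ε x i ≠ 0) :
    (∀ t : ℝ, 0 < t → ε ^ ((3:ℝ)/2) ≤ ‖Gres n f lam t x‖ ^ 2) ∧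
    ∃ j : ℕ,
      (phi n f lam (Pt n f lam (β ^ j) x) <
          phi n f lam x - ηb / β ^ j * ‖Gres n f lam (β ^ j) x‖ ^ 2) ∧
      (∀ j' < j, ¬(phi n f lam (Pt n f lam (β ^ j') x) <
          phi n f lam x - ηb / β ^ j' * ‖Gres n f lam (β ^ j') x‖ ^ 2)) ∧
      ηb / max (β * Lg / (2 - 2 * ηb)) 1 * ε ^ ((3:ℝ)/2) ≤
        phi n f lam x - phi n f lam (Pt n f lam (β ^ j) x) :=
  stmt10_general f lam hlam Lg hquad ηb β ε hη hβ hε x hi
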